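/- arXiv:2504.02720 — 4 statements merged into one kernel-verified Lean document; each statement's English description precedes it below -/
import Mathlib

section
/- Let Γ be a finite group with an involutive automorphism σ_Γ, and let X be a set equipped with a left Γ-action and an involution σ_X : X → X such that σ_X(g • x) = σ_Γ(g) • σ_X(x) for all g ∈ Γ and x ∈ X. Call a real Γ-torsor over X a tuple (P, •, ι, f) where P is a set with a free and transitive left Γ-action, ι : P → P is an involution satisfying ι(g • p) = σ_Γ(g) • ι(p), and f : P → X is a Γ-equivariant map with f ∘ ι = σ_X ∘ f; two such tuples (P₁, ι₁, f₁), (P₂, ι₂, f₂) are isomorphic if there is a Γ-equivariant bijection h : P₁ → P₂ with h ∘ ι₁ = ι₂ ∘ h and f₂ ∘ h = f₁. Let H ⊆ Γ be a subset such that every γ ∈ H satisfies γ·σ_Γ(γ) = 1 and the map from H to H¹(σ_Γ, Γ) sending γ to its class is a bijection. Then there is a bijection between the set of isomorphism classes of real Γ-torsors over X and the disjoint union, over γ ∈ H, of the quotient of the set {x ∈ X : γ • σ_X(x) = x} by the action of the subgroup {g ∈ Γ : γ·σ_Γ(g)·γ⁻¹ = g}. -/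
/-- A real Γ-torsor over X: a set P with a free and transitive left Γ-action,
an involution ι compatible with the twisted Γ-action via σ_Γ, and a
Γ-equivariant map f : P → X intertwining ι and σ_X. -/
structure RealTorsor (Γ : Type) [Group Γ] (σΓ : Γ →* Γ)
    (X : Type) [MulAction Γ X] (σX : X → X) : Type 1 where
  P : Type
  smul : Γ → P → P
  smul_one : ∀ p, smul 1 p = p
  smul_mul : ∀ g h p, smul (g * h) p = smul g (smul h p)
  nonempty : Nonempty P
  free : ∀ g p, smul g p = p → g = 1
  transitive : ∀ p q : P, ∃ g, smul g p = q
  invol : P → P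
  invol_invol : ∀ p, invol (invol p) = p
  invol_smul : ∀ g p, invol (smul g p) = smul (σΓ g) (invol p)
  proj : P → X
  proj_smul : ∀ g p, proj (smul g p) = g • proj p
  proj_invol : ∀ p, proj (invol p) = σX (proj p)

/-- Isomorphism of real Γ-torsors over X: a Γ-equivariant bijection commuting
with the involutions and with the maps to X. -/
def RealTorsor.Iso {Γ : Type} [Group Γ] {σΓ : Γ →* Γ}
    {X : Type} [MulAction Γ X] {σX : X → X}
    (T₁ T₂ : RealTorsor Γ σΓ X σX) : Prop :=
  ∃ h : T₁.P ≃ T₂.P,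
    (∀ g p, h (T₁.smul g p) = T₂.smul g (h p)) ∧
    (∀ p, h (T₁.invol p) = T₂.invol (h p)) ∧
    (∀ p, T₂.proj (h p) = T₁.proj p)

section Aux

variable {Γ : Type} [Group Γ] {σΓ : Γ →* Γ} {X : Type} [MulAction Γ X] {σX : X → X}

theorem RealTorsor.iso_equivalence :
    Equivalence (RealTorsor.Iso (Γ := Γ) (σΓ := σΓ) (X := X) (σX := σX)) := by
  constructor
  · intro T
    exact ⟨Equiv.refl _, fun g p => rfl, fun p => rfl, fun p => rfl⟩
  · rintro T₁ T₂ ⟨h, h1, h2, h3⟩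
    refine ⟨h.symm, ?_, ?_, ?_⟩
    · intro g p
      apply h.injective
      rw [Equiv.apply_symm_apply, h1, Equiv.apply_symm_apply]
    · intro p
      apply h.injective
      rw [Equiv.apply_symm_apply, h2, Equiv.apply_symm_apply]
    · intro p
      rw [← h3 (h.symm p), Equiv.apply_symm_apply]
  · rintro T₁ T₂ T₃ ⟨h, h1, h2, h3⟩ ⟨k, k1, k2, k3⟩
    refine ⟨h.trans k, ?_, ?_, ?_⟩
    · intro g p; simp [Equiv.trans_apply, h1, k1]
    · intro p; simp [Equiv.trans_apply, h2, k2]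
    · intro p; simp [Equiv.trans_apply, h3, k3]

theorem cocycleRel_equivalence (hσΓ : ∀ g, σΓ (σΓ g) = g) :
    Equivalence (fun a b : {g : Γ // g * σΓ g = 1} =>
      ∃ β : Γ, (b : Γ) = β * (a : Γ) * (σΓ β)⁻¹) := by
  constructor
  · intro a; exact ⟨1, by simp⟩
  · rintro a b ⟨β, hβ⟩
    refine ⟨β⁻¹, ?_⟩
    rw [hβ, map_inv, inv_inv]
    group
  · rintro a b c ⟨β₁, h₁⟩ ⟨β₂, h₂⟩
    refine ⟨β₂ * β₁, ?_⟩
    rw [h₂, h₁, map_mul, mul_inv_rev]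
    group

/-- The standard real torsor attached to a cocycle γ and a point x of the
γ-twisted real locus. -/
def stdTorsor (hσΓ : ∀ g, σΓ (σΓ g) = g)
    (hcomp : ∀ (g : Γ) (x : X), σX (g • x) = σΓ g • σX x)
    (γ : Γ) (hγ : γ * σΓ γ = 1) (x : X) (hx : γ • σX x = x) :
    RealTorsor Γ σΓ X σX where
  P := Γ
  smul g p := g * p
  smul_one p := one_mul p
  smul_mul g h p := mul_assoc g h p
  nonempty := ⟨1⟩
  free g p h := mul_right_cancel (b := p) (by rw [one_mul]; exact h)
  transitive p q := ⟨q * p⁻¹, by group⟩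
  invol p := σΓ p * γ⁻¹
  invol_invol p := by
    show σΓ (σΓ p * γ⁻¹) * γ⁻¹ = p
    have h1 : σΓ γ = γ⁻¹ := eq_inv_of_mul_eq_one_right hγ
    rw [map_mul, map_inv, hσΓ, h1, inv_inv]
    group
  invol_smul g p := by
    show σΓ (g * p) * γ⁻¹ = σΓ g * (σΓ p * γ⁻¹)
    rw [map_mul]; group
  proj p := p • x
  proj_smul g p := mul_smul g p x
  proj_invol p := by
    show (σΓ p * γ⁻¹) • x = σX (p • x)
    have hx' : γ⁻¹ • x = σX x := inv_smul_eq_iff.mpr hx.symm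
    rw [hcomp, ← hx', mul_smul]

theorem stdTorsor_iso (hσΓ : ∀ g, σΓ (σΓ g) = g)
    (hcomp : ∀ (g : Γ) (x : X), σX (g • x) = σΓ g • σX x)
    (γ : Γ) (hγ : γ * σΓ γ = 1) (x y : X) (hx : γ • σX x = x) (hy : γ • σX y = y)
    (g : Γ) (hg : γ * σΓ g * γ⁻¹ = g) (hgx : g • x = y) :
    RealTorsor.Iso (stdTorsor hσΓ hcomp γ hγ x hx) (stdTorsor hσΓ hcomp γ hγ y hy) := by
  have h2 : γ * σΓ g = g * γ := by
    conv_rhs => rw [← hg]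
    group
  have key : γ⁻¹ * g⁻¹ = (σΓ g)⁻¹ * γ⁻¹ := by
    rw [← mul_inv_rev, ← mul_inv_rev, h2]
  refine ⟨⟨fun p : Γ => p * g⁻¹, fun p : Γ => p * g, fun p : Γ => by simp [mul_assoc]; rfl,
      fun p : Γ => by simp [mul_assoc]; rfl⟩, ?_, ?_, ?_⟩
  · show ∀ a p : Γ, (a * p) * g⁻¹ = a * (p * g⁻¹)
    intro a p
    rw [mul_assoc]
  · show ∀ p : Γ, σΓ p * γ⁻¹ * g⁻¹ = σΓ (p * g⁻¹) * γ⁻¹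
    intro p
    rw [map_mul, map_inv, mul_assoc, mul_assoc, key]
  · show ∀ p : Γ, (p * g⁻¹) • y = p • x
    intro p
    rw [← hgx, mul_smul, inv_smul_smul]

end Aux

/-- Theorem 1.1 (set-theoretic content): the set of isomorphism classes of real
Γ-torsors over X is in bijection with the disjoint union, over a complete set H
of representatives of H¹(σ_Γ, Γ), of the quotients of the twisted real loci
`{x : γ • σ_X(x) = x}` by the twisted real groups `{g : γ·σ_Γ(g)·γ⁻¹ = g}`. -/
theorem stmt0 (Γ : Type) [Group Γ] [Finite Γ]
    (σΓ : Γ →* Γ) (hσΓ : ∀ g, σΓ (σΓ g) = g)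
    (X : Type) [MulAction Γ X] (σX : X → X) (hσX : ∀ x, σX (σX x) = x)
    (hcomp : ∀ (g : Γ) (x : X), σX (g • x) = σΓ g • σX x)
    (H : Set Γ) (hH : ∀ γ ∈ H, γ * σΓ γ = 1)
    (hbij : Function.Bijective fun γ : H =>
      Quot.mk (fun a b : {g : Γ // g * σΓ g = 1} =>
          ∃ β : Γ, (b : Γ) = β * (a : Γ) * (σΓ β)⁻¹)
        ⟨(γ : Γ), hH γ.1 γ.2⟩) :
    Nonempty (Quot (RealTorsor.Iso (Γ := Γ) (σΓ := σΓ) (X := X) (σX := σX)) ≃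
      Σ γ : H, Quot (fun x y : {x : X // (γ : Γ) • σX x = x} =>
        ∃ g : Γ, (γ : Γ) * σΓ g * (γ : Γ)⁻¹ = g ∧ g • (x : X) = (y : X))) := by
  classical
  set R : {g : Γ // g * σΓ g = 1} → {g : Γ // g * σΓ g = 1} → Prop :=
    fun a b => ∃ β : Γ, (b : Γ) = β * (a : Γ) * (σΓ β)⁻¹ with hR
  let std : (γ : H) → {x : X // (γ : Γ) • σX x = x} → RealTorsor Γ σΓ X σX :=
    fun γ x => stdTorsor hσΓ hcomp (γ : Γ) (hH γ.1 γ.2) x.1 x.2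
  let G : (Σ γ : H, Quot (fun x y : {x : X // (γ : Γ) • σX x = x} =>
        ∃ g : Γ, (γ : Γ) * σΓ g * (γ : Γ)⁻¹ = g ∧ g • (x : X) = (y : X))) →
      Quot (RealTorsor.Iso (Γ := Γ) (σΓ := σΓ) (X := X) (σX := σX)) :=
    fun s => Quot.lift (fun x => Quot.mk _ (std s.1 x))
      (by
        rintro x y ⟨g, hg, hgx⟩
        exact Quot.sound (stdTorsor_iso hσΓ hcomp _ _ x.1 y.1 x.2 y.2 g hg hgx)) s.2
  refine ⟨(Equiv.ofBijective G ⟨?_, ?_⟩).symm⟩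
  · -- injectivity
    rintro ⟨γ₁, q₁⟩ ⟨γ₂, q₂⟩ hab
    obtain ⟨x₁, rfl⟩ := Quot.exists_rep q₁
    obtain ⟨x₂, rfl⟩ := Quot.exists_rep q₂
    replace hab : Quot.mk _ (std γ₁ x₁) = Quot.mk _ (std γ₂ x₂) := hab
    have hiso : RealTorsor.Iso (std γ₁ x₁) (std γ₂ x₂) := by
      have h := Quot.eqvGen_exact hab
      rwa [(RealTorsor.iso_equivalence (Γ := Γ) (σΓ := σΓ) (X := X) (σX := σX)).eqvGen_eq] at h
    obtain ⟨h, h1, h2, h3⟩ := hiso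
    let f : Γ → Γ := fun p => h p
    have hf1 : ∀ g p : Γ, f (g * p) = g * f p := h1
    have hf2 : ∀ p : Γ, f (σΓ p * (γ₁ : Γ)⁻¹) = σΓ (f p) * (γ₂ : Γ)⁻¹ := h2
    have hf3 : ∀ p : Γ, (f p) • (x₂ : X) = p • (x₁ : X) := h3
    set β : Γ := f 1 with hβdef
    have a : (γ₁ : Γ)⁻¹ * β = σΓ β * (γ₂ : Γ)⁻¹ := by
      have t := hf2 1
      rw [map_one, one_mul] at t
      have t2 : f ((γ₁ : Γ)⁻¹ * 1) = (γ₁ : Γ)⁻¹ * f 1 := hf1 _ 1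
      rw [mul_one] at t2
      rw [t2] at t
      exact t
    have a' : (γ₁ : Γ)⁻¹ = σΓ β * (γ₂ : Γ)⁻¹ * β⁻¹ := by
      rw [eq_mul_inv_iff_mul_eq]; exact a
    have e1 : (γ₁ : Γ) = β * (γ₂ : Γ) * (σΓ β)⁻¹ := by
      apply inv_injective
      rw [a']; group
    have hq : (fun γ : H => Quot.mk R ⟨(γ : Γ), hH γ.1 γ.2⟩) γ₂ =
        (fun γ : H => Quot.mk R ⟨(γ : Γ), hH γ.1 γ.2⟩) γ₁ :=
      Quot.sound ⟨β, e1⟩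
    have hγ : γ₂ = γ₁ := hbij.injective hq
    subst hγ
    have e2 : (γ₂ : Γ) * σΓ β = β * (γ₂ : Γ) := by
      conv_lhs => rw [e1]
      group
    have e3 : (γ₂ : Γ) * σΓ β * (γ₂ : Γ)⁻¹ = β := by rw [e2]; group
    have e4 : β • (x₂ : X) = (x₁ : X) := by
      have t := hf3 1
      rwa [one_smul] at t
    exact congrArg (Sigma.mk γ₂) ((Quot.sound ⟨β, e3, e4⟩).symm)
  · -- surjectivity
    intro q
    obtain ⟨T, rfl⟩ := Quot.exists_rep q
    obtain ⟨p₀⟩ := T.nonempty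
    obtain ⟨c, hc⟩ := T.transitive p₀ (T.invol p₀)
    have hfix : σΓ c * c = 1 := by
      apply T.free _ p₀
      rw [T.smul_mul, hc, ← T.invol_smul, hc, T.invol_invol]
    have hz : c⁻¹ * σΓ c⁻¹ = 1 := by
      rw [map_inv, ← mul_inv_rev, hfix, inv_one]
    obtain ⟨γ, hγq⟩ := hbij.2 (Quot.mk R ⟨c⁻¹, hz⟩)
    have hrel : R ⟨(γ : Γ), hH γ.1 γ.2⟩ ⟨c⁻¹, hz⟩ := by
      have h := Quot.eqvGen_exact hγq
      rwa [(cocycleRel_equivalence hσΓ).eqvGen_eq] at h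
    obtain ⟨β, hβ⟩ := hrel
    have hβ' : c⁻¹ = β * (γ : Γ) * (σΓ β)⁻¹ := hβ
    have hinvol : T.invol (T.smul β⁻¹ p₀) = T.smul (γ : Γ)⁻¹ (T.smul β⁻¹ p₀) := by
      rw [T.invol_smul, ← hc, ← T.smul_mul, ← T.smul_mul]
      congr 1
      rw [map_inv]
      have hcval : c = (β * (γ : Γ) * (σΓ β)⁻¹)⁻¹ := by rw [← hβ', inv_inv]
      rw [hcval]; group
    have hx₁ : (γ : Γ) • σX (T.proj (T.smul β⁻¹ p₀)) = T.proj (T.smul β⁻¹ p₀) := by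
      rw [← T.proj_invol, hinvol, T.proj_smul, smul_smul, mul_inv_cancel, one_smul]
    refine ⟨⟨γ, Quot.mk _ ⟨T.proj (T.smul β⁻¹ p₀), hx₁⟩⟩, ?_⟩
    show Quot.mk _ (std γ ⟨T.proj (T.smul β⁻¹ p₀), hx₁⟩) = Quot.mk _ T
    apply Quot.sound
    have hbijf : Function.Bijective (fun g : Γ => T.smul g (T.smul β⁻¹ p₀)) := by
      constructor
      · intro a b hab2
        have hab2' : T.smul a (T.smul β⁻¹ p₀) = T.smul b (T.smul β⁻¹ p₀) := hab2
        have h5 : T.smul (b⁻¹ * a) (T.smul β⁻¹ p₀) = T.smul β⁻¹ p₀ := by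
          rw [T.smul_mul, hab2', ← T.smul_mul, inv_mul_cancel, T.smul_one]
        have h6 := T.free _ _ h5
        rw [inv_mul_eq_one] at h6
        exact h6.symm
      · intro p
        exact T.transitive _ p
    refine ⟨Equiv.ofBijective _ hbijf, ?_, ?_, ?_⟩
    · show ∀ g p : Γ, T.smul (g * p) (T.smul β⁻¹ p₀) = T.smul g (T.smul p (T.smul β⁻¹ p₀))
      intro g p
      exact T.smul_mul g p _
    · show ∀ p : Γ, T.smul (σΓ p * (γ : Γ)⁻¹) (T.smul β⁻¹ p₀) =
        T.invol (T.smul p (T.smul β⁻¹ p₀))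
      intro p
      rw [T.invol_smul, hinvol]
      exact T.smul_mul _ _ _
    · show ∀ p : Γ, T.proj (T.smul p (T.smul β⁻¹ p₀)) = p • T.proj (T.smul β⁻¹ p₀)
      intro p
      exact T.proj_smul p _
end

section
/- Let f : Y → U be a covering map of topological spaces, and let σ_U : U → U and σ_Y : Y → Y be continuous involutions with f ∘ σ_Y = σ_U ∘ f. Let p, q ∈ U satisfy σ_U(p) = p and σ_U(q) = q, and let γ : [0,1] → U be a path from q to p. Let ω : [0,1] → U be the concatenated loop (σ_U ∘ γ) ∗ γ⁻¹ based at p, where γ⁻¹ is the reverse path. Fix y ∈ Y with f(y) = q. Suppose γ̃, η̃, ω̃ : [0,1] → Y are continuous maps such that: f ∘ γ̃ = γ and γ̃(0) = y; f ∘ η̃ = γ and η̃(0) = σ_Y(y); f ∘ ω̃ = ω and ω̃(0) = η̃(1). Then ω̃(1) = σ_Y(γ̃(1)). In other words, transporting y along γ and then applying σ_Y gives the same result as applying σ_Y, transporting along γ, and then transporting along the monodromy loop ω. -/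
/-! The lift of `ω` starting at `η̃(1)` is `η̃⁻¹ ∗ (σ_Y ∘ γ̃)`: this path starts at `η̃(1)` and, since
`f ∘ σ_Y = σ_U ∘ f`, lies over `γ⁻¹ ∗ (σ_U ∘ γ)`. Uniqueness of lifts then identifies its endpoint
`σ_Y(γ̃(1))` with `ω̃(1)`. -/

open unitInterval

namespace Path

variable {X : Type*} [TopologicalSpace X]

theorem coe_symm_congr {x y x' y' : X} {γ : Path x y} {δ : Path x' y'} (h : ⇑γ = ⇑δ) :
    ⇑γ.symm = ⇑δ.symm :=
  funext fun t => by simp only [symm_apply, h]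

theorem coe_trans_congr {x y z x' y' z' : X} {γ₁ : Path x y} {γ₂ : Path y z}
    {δ₁ : Path x' y'} {δ₂ : Path y' z'} (h₁ : ⇑γ₁ = ⇑δ₁) (h₂ : ⇑γ₂ = ⇑δ₂) :
    ⇑(γ₁.trans γ₂) = ⇑(δ₁.trans δ₂) :=
  funext fun t => by simp only [trans_apply, h₁, h₂]

end Path

theorem IsCoveringMap.apply_one_eq_of_comp_eq_map {E X : Type*} [TopologicalSpace E]
    [TopologicalSpace X] {p : E → X} (hp : IsCoveringMap p) {Γ : I → E} (hΓ : Continuous Γ)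
    {a b : E} (Ψ : Path a b) (hlift : p ∘ Γ = ⇑(Ψ.map hp.continuous)) (h0 : Γ 0 = a) :
    Γ 1 = b :=
  (congr_fun (hp.eq_of_comp_eq hΓ Ψ.continuous hlift 0 (h0.trans Ψ.source.symm)) 1).trans
    Ψ.target

theorem stmt3_general {Y U : Type} [TopologicalSpace Y] [TopologicalSpace U]
    (f : Y → U) (hf : IsCoveringMap f)
    (σU : U → U) (hσUc : Continuous σU)
    (σY : Y → Y) (hσYc : Continuous σY)
    (hfσ : ∀ y, f (σY y) = σU (f y))
    {p q : U} (hp : σU p = p) (hq : σU q = q)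
    (γ : Path q p) (y : Y)
    (γt ηt ωt : unitInterval → Y)
    (hγc : Continuous γt) (hηc : Continuous ηt) (hωc : Continuous ωt)
    (hγl : ∀ t, f (γt t) = γ t) (hγ0 : γt 0 = y)
    (hηl : ∀ t, f (ηt t) = γ t) (hη0 : ηt 0 = σY y)
    (hωl : ∀ t, f (ωt t) = (γ.symm.trans ((γ.map hσUc).cast hq.symm hp.symm)) t)
    (hω0 : ωt 0 = ηt 1) :
    ωt 1 = σY (γt 1) := by
  let γLift : Path y (γt 1) := ⟨⟨γt, hγc⟩, hγ0, rfl⟩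
  let ηLift : Path (σY y) (ηt 1) := ⟨⟨ηt, hηc⟩, hη0, rfl⟩
  have hηLift : ⇑γ = ⇑(ηLift.map hf.continuous) := (funext hηl).symm
  have hσγLift : ⇑((γ.map hσUc).cast hq.symm hp.symm) = ⇑((γLift.map hσYc).map hf.continuous) :=
    funext fun t => ((hfσ _).trans (congrArg σU (hγl t))).symm
  refine hf.apply_one_eq_of_comp_eq_map hωc (ηLift.symm.trans (γLift.map hσYc)) ?_ hω0
  rw [Path.map_trans, ← Path.map_symm]
  exact (funext hωl).trans (Path.coe_trans_congr (Path.coe_symm_congr hηLift) hσγLift)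

/-- Change of base point for a covering with compatible involutions: if γ is a
path from q to p between fixed points of σ_U, ω = (σ_U ∘ γ) ∗ γ⁻¹ the associated
monodromy loop at p, γ̃ the lift of γ starting at y, η̃ the lift of γ starting at
σ_Y(y), and ω̃ the lift of ω starting at η̃(1), then ω̃(1) = σ_Y(γ̃(1)). -/
theorem stmt3 {Y U : Type} [TopologicalSpace Y] [TopologicalSpace U]
    (f : Y → U) (hf : IsCoveringMap f)
    (σU : U → U) (hσUc : Continuous σU) (hσU : Function.Involutive σU)
    (σY : Y → Y) (hσYc : Continuous σY) (hσY : Function.Involutive σY)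
    (hfσ : ∀ y, f (σY y) = σU (f y))
    {p q : U} (hp : σU p = p) (hq : σU q = q)
    (γ : Path q p) (y : Y) (hy : f y = q)
    (γt ηt ωt : unitInterval → Y)
    (hγc : Continuous γt) (hηc : Continuous ηt) (hωc : Continuous ωt)
    (hγl : ∀ t, f (γt t) = γ t) (hγ0 : γt 0 = y)
    (hηl : ∀ t, f (ηt t) = γ t) (hη0 : ηt 0 = σY y)
    (hωl : ∀ t, f (ωt t) = (γ.symm.trans ((γ.map hσUc).cast hq.symm hp.symm)) t)
    (hω0 : ωt 0 = ηt 1) :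
    ωt 1 = σY (γt 1) :=
  stmt3_general f hf σU hσUc σY hσYc hfσ hp hq γ y γt ηt ωt hγc hηc hωc hγl hγ0 hηl hη0 hωl hω0
end

section
/- Let A be a finite abelian group and σ : A → A an automorphism with σ ∘ σ = id. Suppose that every element of A killed by 4 is killed by 2 (i.e. A[2] = A[4], where A[m] = {a ∈ A : m·a = 0}). Then the inclusion of {a ∈ A[2] : σ(a) = a} into {a ∈ A : a + σ(a) = 0} induces a group isomorphism from the quotient {a ∈ A[2] : σ(a) = a} / {c + σ(c) : c ∈ A[2]} onto H¹(σ, A) = {a ∈ A : a + σ(a) = 0} / {b − σ(b) : b ∈ A}. -/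
/-!
Write `|A| = 2ᵏ·m` with `m` odd. Since `A[4] = A[2]`, also `A[2ᵏ] = A[2]`, so multiplication
by `m` maps `A` into `A[2]` and is the identity on `A[2]`. A cocycle `a` (so `σ a = -a`) is
cohomologous to `m • a`, which is σ-fixed 2-torsion, because
`(m - 1) • a = j • a - σ (j • a)` for `m = 2j + 1`. A fixed 2-torsion coboundary `a = b - σ b`
equals `m • a = b' - σ b'` with `b' = m • b ∈ A[2]`, and on `A[2]` the maps `1 - σ` and
`1 + σ` agree.
-/

/-- The 2-torsion subgroup A[2] = ker(2•id). -/
abbrev twoTor (A : Type) [AddCommGroup A] : AddSubgroup A :=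
  (2 • AddMonoidHom.id A).ker

/-- The cocycle subgroup Z¹(σ,A) = {a : a + σ(a) = 0} = ker(id + σ). -/
abbrev Zone (A : Type) [AddCommGroup A] (σ : A →+ A) : AddSubgroup A :=
  (AddMonoidHom.id A + σ).ker

/-- The coboundary subgroup B¹(σ,A) = {b - σ(b)} = range(id - σ). -/
abbrev Bone (A : Type) [AddCommGroup A] (σ : A →+ A) : AddSubgroup A :=
  (AddMonoidHom.id A - σ).range

/-- H¹(σ,A) = Z¹(σ,A)/B¹(σ,A). -/
abbrev Hone (A : Type) [AddCommGroup A] (σ : A →+ A) :=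
  Zone A σ ⧸ (Bone A σ).addSubgroupOf (Zone A σ)

/-- The σ-fixed 2-torsion {a ∈ A[2] : σ(a) = a}. -/
abbrev FixTwo (A : Type) [AddCommGroup A] (σ : A →+ A) : AddSubgroup A :=
  twoTor A ⊓ (AddMonoidHom.id A - σ).ker

/-- The subgroup {c + σ(c) : c ∈ A[2]}. -/
abbrev BTwo (A : Type) [AddCommGroup A] (σ : A →+ A) : AddSubgroup A :=
  AddSubgroup.map (AddMonoidHom.id A + σ) (twoTor A)

section TwoTorsion

variable {A : Type} [AddCommGroup A]

lemma mem_twoTor_iff {a : A} : a ∈ twoTor A ↔ 2 • a = 0 := by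
  simp

lemma neg_eq_self_of_mem_twoTor {a : A} (ha : a ∈ twoTor A) : -a = a :=
  neg_eq_iff_add_eq_zero.2 (by rw [← two_nsmul]; exact mem_twoTor_iff.1 ha)

lemma odd_nsmul_eq_self_of_mem_twoTor {m : ℕ} (hm : Odd m) {a : A} (ha : a ∈ twoTor A) :
    m • a = a := by
  obtain ⟨j, rfl⟩ := hm
  rw [add_nsmul, one_nsmul, mul_nsmul, mem_twoTor_iff.1 ha, nsmul_zero, zero_add]

lemma two_nsmul_eq_zero_of_two_pow_nsmul_eq_zero (h24 : ∀ a : A, 4 • a = 0 → 2 • a = 0) :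
    ∀ (k : ℕ) {x : A}, 2 ^ k • x = 0 → 2 • x = 0
  | 0, x, hx => by rw [pow_zero, one_nsmul] at hx; rw [hx, nsmul_zero]
  | k + 1, x, hx => by
    have h2x := two_nsmul_eq_zero_of_two_pow_nsmul_eq_zero h24 k
      (x := 2 • x) (by rwa [smul_smul, ← pow_succ])
    exact h24 x (by rwa [smul_smul] at h2x)

lemma exists_odd_nsmul_mem_twoTor [Finite A] (h24 : ∀ a : A, 4 • a = 0 → 2 • a = 0) :
    ∃ m : ℕ, Odd m ∧ ∀ b : A, m • b ∈ twoTor A := by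
  obtain ⟨k, m, hm, hcard⟩ := Nat.exists_eq_two_pow_mul_odd (Nat.card_pos (α := A)).ne'
  refine ⟨m, hm, fun b => mem_twoTor_iff.2 ?_⟩
  refine two_nsmul_eq_zero_of_two_pow_nsmul_eq_zero h24 k ?_
  rw [smul_smul, ← hcard, card_nsmul_eq_zero']

lemma map_mem_twoTor {B : Type} [AddCommGroup B] (f : A →+ B) {a : A} (ha : a ∈ twoTor A) :
    f a ∈ twoTor B := by
  rw [mem_twoTor_iff, ← map_nsmul, mem_twoTor_iff.1 ha, map_zero]

end TwoTorsion

section Cohomology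

variable {A : Type} [AddCommGroup A] (σ : A →+ A)

lemma map_eq_neg_of_mem_Zone {a : A} (ha : a ∈ Zone A σ) : σ a = -a :=
  eq_neg_of_add_eq_zero_right (by simpa using ha)

lemma FixTwo_le_Zone : FixTwo A σ ≤ Zone A σ := by
  rintro a ⟨h2, hfix⟩
  have hσ : σ a = a := (sub_eq_zero.1 (by simpa using hfix)).symm
  simp [hσ, ← two_nsmul, mem_twoTor_iff.1 h2]

lemma BTwo_le_Bone : BTwo A σ ≤ Bone A σ := by
  rintro _ ⟨c, hc, rfl⟩
  refine ⟨c, ?_⟩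
  simp [sub_eq_add_neg, neg_eq_self_of_mem_twoTor (map_mem_twoTor σ hc)]

lemma two_mul_nsmul_mem_Bone {a : A} (ha : a ∈ Zone A σ) (j : ℕ) :
    (2 * j) • a ∈ Bone A σ := by
  refine ⟨j • a, ?_⟩
  simp [map_eq_neg_of_mem_Zone σ ha, mul_nsmul', two_nsmul]

variable {σ} {m : ℕ}

lemma exists_mem_FixTwo_sub_mem_Bone (hm : Odd m) (hmA : ∀ b : A, m • b ∈ twoTor A) {a : A}
    (ha : a ∈ Zone A σ) : ∃ x ∈ FixTwo A σ, x - a ∈ Bone A σ := by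
  obtain ⟨j, rfl⟩ := hm
  refine ⟨(2 * j + 1) • a, ⟨hmA a, ?_⟩, ?_⟩
  · simp [map_eq_neg_of_mem_Zone σ ha, neg_eq_self_of_mem_twoTor (hmA a)]
  · simpa [add_nsmul] using two_mul_nsmul_mem_Bone σ ha j

lemma FixTwo_inf_Bone_le_BTwo (hm : Odd m) (hmA : ∀ b : A, m • b ∈ twoTor A) :
    FixTwo A σ ⊓ Bone A σ ≤ BTwo A σ := by
  rintro a ⟨⟨h2, -⟩, b, rfl⟩
  refine ⟨m • b, hmA b, ?_⟩
  have hσ : σ (m • b) = -σ (m • b) :=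
    (neg_eq_self_of_mem_twoTor (map_mem_twoTor σ (hmA b))).symm
  calc m • b + σ (m • b) = m • (b - σ b) := by rw [hσ, smul_sub, map_nsmul, sub_eq_add_neg]
    _ = b - σ b := odd_nsmul_eq_self_of_mem_twoTor hm h2
    _ = (AddMonoidHom.id A - σ) b := rfl

end Cohomology

theorem stmt10_general (A : Type) [AddCommGroup A] [Finite A]
    (σ : A →+ A)
    (h24 : ∀ a : A, 4 • a = 0 → 2 • a = 0) :
    ∃ e : (FixTwo A σ ⧸ (BTwo A σ).addSubgroupOf (FixTwo A σ)) ≃+ Hone A σ,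
      ∀ (a : A) (h2 : a ∈ FixTwo A σ) (hz : a ∈ Zone A σ),
        e (QuotientAddGroup.mk ⟨a, h2⟩) = QuotientAddGroup.mk ⟨a, hz⟩ := by
  obtain ⟨m, hm, hmA⟩ := exists_odd_nsmul_mem_twoTor h24
  let φ : FixTwo A σ →+ Hone A σ :=
    (QuotientAddGroup.mk' _).comp (AddSubgroup.inclusion (FixTwo_le_Zone σ))
  have hφ : Function.Surjective φ := by
    rintro ⟨a, ha⟩
    obtain ⟨x, hx, hxa⟩ := exists_mem_FixTwo_sub_mem_Bone hm hmA ha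
    exact ⟨⟨x, hx⟩, QuotientAddGroup.eq_iff_sub_mem.2 (AddSubgroup.mem_addSubgroupOf.2 hxa)⟩
  have hker : (BTwo A σ).addSubgroupOf (FixTwo A σ) = φ.ker := by
    ext ⟨a, ha⟩
    rw [AddMonoidHom.mem_ker, AddSubgroup.mem_addSubgroupOf]
    change _ ↔ QuotientAddGroup.mk _ = _
    rw [QuotientAddGroup.eq_zero_iff, AddSubgroup.mem_addSubgroupOf]
    exact ⟨fun hB => BTwo_le_Bone σ hB, fun hB => FixTwo_inf_Bone_le_BTwo hm hmA ⟨ha, hB⟩⟩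
  exact ⟨(QuotientAddGroup.quotientAddEquivOfEq hker).trans
    (QuotientAddGroup.quotientKerEquivOfSurjective φ hφ), fun _ _ _ => rfl⟩

/-- For a finite abelian group A with involution σ and A[2] = A[4], the
inclusion {a ∈ A[2] : σ(a) = a} ⊆ Z¹(σ,A) induces a group isomorphism
{a ∈ A[2] : σ(a) = a}/{c + σ(c) : c ∈ A[2]} ≅ H¹(σ,A). -/
theorem stmt10 (A : Type) [AddCommGroup A] [Finite A]
    (σ : A →+ A) (hσ : ∀ a, σ (σ a) = a)
    (h24 : ∀ a : A, 4 • a = 0 → 2 • a = 0) :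
    ∃ e : (FixTwo A σ ⧸ (BTwo A σ).addSubgroupOf (FixTwo A σ)) ≃+ Hone A σ,
      ∀ (a : A) (h2 : a ∈ FixTwo A σ) (hz : a ∈ Zone A σ),
        e (QuotientAddGroup.mk ⟨a, h2⟩) = QuotientAddGroup.mk ⟨a, hz⟩ :=
  stmt10_general A σ h24
end

section
/- Let A be a finite abelian group and σ : A → A an automorphism with σ ∘ σ = id, and suppose A[2] = A[4] (every element killed by 4 is killed by 2). Every a ∈ A decomposes uniquely as a = a₂ + a' with a₂ ∈ A[2] and a' of odd order. Then the map sending a ∈ A^σ = {a ∈ A : σ(a) = a} to the class of a₂ in H¹(σ, A) is a well-defined surjective group homomorphism from A^σ onto H¹(σ, A). Moreover, for every automorphism φ of A commuting with σ, this surjection is φ-equivariant: φ preserves A^σ, φ induces a well-defined automorphism of H¹(σ, A) (by a ↦ φ(a) on cocycles), and the surjection intertwines these two actions. -/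
lemma odd_of_dvd_odd {d m : ℕ} (h : d ∣ m) (hm : Odd m) : Odd d := by
  rw [← Nat.not_even_iff_odd] at hm ⊢
  exact fun hd => hm ((even_iff_two_dvd.mp hd).trans h |> even_iff_two_dvd.mpr)

lemma odd_ord_add {A : Type} [AddCommGroup A] {x y : A}
    (hx : Odd (addOrderOf x)) (hy : Odd (addOrderOf y)) : Odd (addOrderOf (x + y)) := by
  refine odd_of_dvd_odd (addOrderOf_dvd_of_nsmul_eq_zero ?_) (hx.mul hy)
  rw [smul_add, mul_nsmul, addOrderOf_nsmul_eq_zero, smul_zero,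
    mul_nsmul', addOrderOf_nsmul_eq_zero, smul_zero, add_zero]

lemma my_decomp (A : Type) [AddCommGroup A] [Finite A]
    (h24 : ∀ a : A, 4 • a = 0 → 2 • a = 0) (a : A) :
    ∃! p : A × A, p.1 + p.2 = a ∧ 2 • p.1 = 0 ∧ Odd (addOrderOf p.2) := by
  set n := addOrderOf a with hn
  have hnpos : 0 < n := addOrderOf_pos a
  set k := n.factorization 2 with hk
  set m := n / 2 ^ k with hm
  have hmul : 2 ^ k * m = n := Nat.ordProj_mul_ordCompl_eq_self n 2
  have hmodd : Odd m := by
    rw [← Nat.not_even_iff_odd]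
    exact fun h => Nat.not_dvd_ordCompl Nat.prime_two hnpos.ne' (even_iff_two_dvd.mp h)
  have hk1 : k ≤ 1 := by
    by_contra hk2
    push_neg at hk2
    have h4 : 4 ∣ n := by
      have : (2:ℕ)^2 ∣ 2^k := pow_dvd_pow 2 (by omega)
      calc (4:ℕ) = 2^2 := by norm_num
        _ ∣ 2^k := this
        _ ∣ n := ⟨m, hmul.symm⟩
    obtain ⟨c, hc⟩ := h4
    have hb4 : 4 • (c • a) = 0 := by
      rw [← mul_nsmul', ← hc, hn, addOrderOf_nsmul_eq_zero]
    have hb2 := h24 _ hb4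
    rw [← mul_nsmul'] at hb2
    have := addOrderOf_dvd_of_nsmul_eq_zero hb2
    rw [← hn] at this
    have hcpos : 0 < 2 * c := by omega
    have := Nat.le_of_dvd hcpos this
    omega
  have hn2m : n ∣ 2 * m := by
    have : (2:ℕ)^k ∣ 2 := by
      rcases Nat.le_one_iff_eq_zero_or_eq_one.mp hk1 with h | h <;> simp [h]
    calc n = 2^k * m := hmul.symm
      _ ∣ 2 * m := Nat.mul_dvd_mul_right this m
  obtain ⟨s, hs⟩ := id hmodd
  set q := (m + 1) • a with hq
  set p := a - q with hp
  have h2m : (2 * m) • a = 0 := by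
    rw [← addOrderOf_dvd_iff_nsmul_eq_zero, ← hn]; exact hn2m
  have hsum : p + q = a := sub_add_cancel a q
  have h2p : 2 • p = 0 := by
    rw [hp, smul_sub, hq, ← mul_nsmul', mul_add, mul_one, add_nsmul, h2m, zero_add, sub_self]
  have hoddq : Odd (addOrderOf q) := by
    refine odd_of_dvd_odd (addOrderOf_dvd_of_nsmul_eq_zero ?_) hmodd
    rw [hq, ← mul_nsmul']
    have : m * (m + 1) = (s + 1) * (2 * m) := by rw [hs]; ring
    rw [this, mul_nsmul', h2m, smul_zero]
  refine ⟨(p, q), ⟨hsum, h2p, hoddq⟩, ?_⟩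
  rintro ⟨p', q'⟩ ⟨hsum', h2p', hoddq'⟩
  have hx : p' - p = q - q' := by
    have : p' + q' = p + q := by rw [hsum, hsum']
    abel_nf
    linear_combination (norm := abel) this
  have h2x : 2 • (p' - p) = 0 := by rw [smul_sub, h2p, h2p', sub_zero]
  have hoddx : Odd (addOrderOf (p' - p)) := by
    rw [hx, sub_eq_add_neg]
    exact odd_ord_add hoddq (by rwa [addOrderOf_neg])
  have hdvd2 : addOrderOf (p' - p) ∣ 2 := addOrderOf_dvd_of_nsmul_eq_zero h2x
  have hone : addOrderOf (p' - p) = 1 := by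
    rcases (Nat.dvd_prime Nat.prime_two).mp hdvd2 with h | h
    · exact h
    · rw [Nat.odd_iff, h] at hoddx; omega
  have hpp : p' = p := by
    have := AddMonoid.addOrderOf_eq_one_iff.mp hone
    rwa [sub_eq_zero] at this
  have hqq : q' = q := by
    rw [hpp] at hsum'
    exact add_left_cancel (hsum'.trans hsum.symm)
  rw [hpp, hqq]


/-- The fixed subgroup A^σ = ker(id - σ). -/
abbrev FixedPts (A : Type) [AddCommGroup A] (σ : A →+ A) : AddSubgroup A :=
  (AddMonoidHom.id A - σ).ker

/-- For a finite abelian group A with involution σ and A[2] = A[4]: every a ∈ A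
decomposes uniquely as a 2-torsion part plus an odd-order part, and the map
A^σ → H¹(σ,A) sending a to the class of its 2-torsion part a₂ is a well-defined
surjective group homomorphism, equivariant for every automorphism φ of A
commuting with σ. -/
theorem stmt11 (A : Type) [AddCommGroup A] [Finite A]
    (σ : A →+ A) (hσ : ∀ a, σ (σ a) = a)
    (h24 : ∀ a : A, 4 • a = 0 → 2 • a = 0) :
    (∀ a : A, ∃! p : A × A, p.1 + p.2 = a ∧ 2 • p.1 = 0 ∧ Odd (addOrderOf p.2)) ∧
    ∃ ψ : FixedPts A σ →+ Hone A σ,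
      (∀ (a₂ a' : A) (_ : 2 • a₂ = 0) (_ : Odd (addOrderOf a'))
          (hfix : a₂ + a' ∈ FixedPts A σ) (hz : a₂ ∈ Zone A σ),
          ψ ⟨a₂ + a', hfix⟩ = QuotientAddGroup.mk (⟨a₂, hz⟩ : Zone A σ)) ∧
      Function.Surjective ψ ∧
      ∀ φ : A →+ A, Function.Bijective φ → (∀ a, φ (σ a) = σ (φ a)) →
        (∀ a : A, a ∈ FixedPts A σ → φ a ∈ FixedPts A σ) ∧
        ∃ Φ : Hone A σ ≃+ Hone A σ,
          (∀ (a : A) (ha : a ∈ Zone A σ) (ha' : φ a ∈ Zone A σ),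
            Φ (QuotientAddGroup.mk (⟨a, ha⟩ : Zone A σ)) =
              QuotientAddGroup.mk (⟨φ a, ha'⟩ : Zone A σ)) ∧
          (∀ (a : A) (ha : a ∈ FixedPts A σ) (ha' : φ a ∈ FixedPts A σ),
            Φ (ψ ⟨a, ha⟩) = ψ ⟨φ a, ha'⟩) := by
  classical
  have dec := my_decomp A h24
  refine ⟨dec, ?_⟩
  -- the decomposition function
  set d : A → A × A := fun a => (dec a).choose with hdd
  have hd1 : ∀ a : A, (d a).1 + (d a).2 = a := fun a => ((dec a).choose_spec.1).1
  have hd2 : ∀ a : A, 2 • (d a).1 = 0 := fun a => ((dec a).choose_spec.1).2.1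
  have hd3 : ∀ a : A, Odd (addOrderOf (d a).2) := fun a => ((dec a).choose_spec.1).2.2
  have hdu : ∀ (a : A) (y : A × A),
      y.1 + y.2 = a → 2 • y.1 = 0 → Odd (addOrderOf y.2) → y = d a :=
    fun a y h1 h2 h3 => (dec a).choose_spec.2 y ⟨h1, h2, h3⟩
  -- equivariance of d under any additive hom
  have hdf : ∀ (f : A →+ A) (a : A), d (f a) = (f (d a).1, f (d a).2) := by
    intro f a
    refine (hdu (f a) (f (d a).1, f (d a).2) ?_ ?_ ?_).symm
    · rw [← map_add, hd1]
    · rw [← map_nsmul, hd2, map_zero]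
    · exact odd_of_dvd_odd (addOrderOf_map_dvd f (d a).2) (hd3 a)
  -- additivity of d
  have hda : ∀ a b : A, d (a + b) = ((d a).1 + (d b).1, (d a).2 + (d b).2) := by
    intro a b
    refine (hdu (a + b) _ ?_ ?_ ?_).symm
    · show ((d a).1 + (d b).1) + ((d a).2 + (d b).2) = a + b
      rw [add_add_add_comm, hd1, hd1]
    · show 2 • ((d a).1 + (d b).1) = 0
      rw [smul_add, hd2, hd2, add_zero]
    · exact odd_ord_add (hd3 a) (hd3 b)
  have hdneg : ∀ a : A, d (-a) = (-(d a).1, -(d a).2) := by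
    intro a
    refine (hdu (-a) _ ?_ ?_ ?_).symm
    · show -(d a).1 + -(d a).2 = -a
      rw [← neg_add, hd1]
    · show 2 • (-(d a).1) = 0
      rw [smul_neg, hd2, neg_zero]
    · show Odd (addOrderOf (-(d a).2))
      rw [addOrderOf_neg]; exact hd3 a
  -- membership characterizations
  have memFix : ∀ a : A, a ∈ FixedPts A σ ↔ σ a = a := by
    intro a
    simp only [AddMonoidHom.mem_ker, AddMonoidHom.sub_apply, AddMonoidHom.id_apply,
      sub_eq_zero]
    exact eq_comm
  have memZ : ∀ a : A, a ∈ Zone A σ ↔ a + σ a = 0 := by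
    intro a
    simp only [AddMonoidHom.mem_ker, AddMonoidHom.add_apply, AddMonoidHom.id_apply]
  have memB : ∀ a : A, a ∈ Bone A σ ↔ ∃ b : A, b - σ b = a := by
    intro a
    simp only [AddMonoidHom.mem_range, AddMonoidHom.sub_apply, AddMonoidHom.id_apply]
  -- d-part of a fixed point is a cocycle
  have hz1 : ∀ a : A, a ∈ FixedPts A σ → (d a).1 ∈ Zone A σ := by
    intro a ha
    have hfa : σ a = a := (memFix a).mp ha
    have : (σ (d a).1, σ (d a).2) = d a := by rw [← hdf σ a, hfa]
    have hfix1 : σ (d a).1 = (d a).1 := congrArg Prod.fst this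
    rw [memZ, hfix1, ← two_nsmul, hd2]
  -- the homomorphism ψ
  set ψ0 : FixedPts A σ →+ Zone A σ := AddMonoidHom.mk'
    (fun x => ⟨(d x.1).1, hz1 x.1 x.2⟩)
    (by
      intro x y
      apply Subtype.ext
      show (d ((x + y : FixedPts A σ) : A)).1 = (d x.1).1 + (d y.1).1
      rw [AddSubgroup.coe_add, hda]) with hψ0
  set ψ : FixedPts A σ →+ Hone A σ :=
    (QuotientAddGroup.mk' ((Bone A σ).addSubgroupOf (Zone A σ))).comp ψ0 with hψ
  have hψap : ∀ x : FixedPts A σ, ψ x = QuotientAddGroup.mk (⟨(d x.1).1, hz1 x.1 x.2⟩ : Zone A σ) :=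
    fun x => rfl
  refine ⟨ψ, ?_, ?_, ?_⟩
  · -- specification
    intro a₂ a' h2 hodd hfix hz
    have hde : d (a₂ + a') = (a₂, a') := (hdu (a₂ + a') (a₂, a') rfl h2 hodd).symm
    rw [hψap]
    congr 1
    exact Subtype.ext (congrArg Prod.fst hde)
  · -- surjectivity
    intro c
    induction c using QuotientAddGroup.induction_on with
    | H z =>
      obtain ⟨a, haz⟩ := z
      have haz' : a + σ a = 0 := (memZ a).mp haz
      have hsneg : σ a = -a := eq_neg_of_add_eq_zero_right haz'
      set p := (d a).1 with hpd
      set q := (d a).2 with hqd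
      have hdsig : (σ p, σ q) = (-p, -q) := by
        rw [← hdf σ a, hsneg, hdneg]
      have hsp : σ p = -p := congrArg Prod.fst hdsig
      have hsq : σ q = -q := congrArg Prod.snd hdsig
      have hnp : -p = p := by
        have h2p : p + p = 0 := by rw [← two_nsmul, hd2]
        exact neg_eq_of_add_eq_zero_left h2p
      have hpfix : p ∈ FixedPts A σ := (memFix p).mpr (by rw [hsp, hnp])
      have hpz : p ∈ Zone A σ := (memZ p).mpr (by rw [hsp, add_neg_cancel])
      refine ⟨⟨p, hpfix⟩, ?_⟩
      rw [hψap]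
      have hdp : d p = (p, 0) := by
        refine (hdu p (p, 0) (by simp) (hd2 a) ?_).symm
        show Odd (addOrderOf (0 : A))
        rw [addOrderOf_zero]; exact odd_one
      have heq1 : (⟨(d p).1, hz1 p hpfix⟩ : Zone A σ) = ⟨p, hpz⟩ := by
        apply Subtype.ext
        show (d p).1 = p
        rw [hdp]
      rw [heq1]
      rw [QuotientAddGroup.eq]
      rw [AddSubgroup.mem_addSubgroupOf]
      show (-p + a : A) ∈ Bone A σ
      have : -p + a = q := by rw [← hd1 a, ← hpd, ← hqd, neg_add_cancel_left]
      rw [this, memB]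
      obtain ⟨s, hs⟩ := hd3 a
      refine ⟨(s + 1) • q, ?_⟩
      rw [map_nsmul, hsq, smul_neg, sub_neg_eq_add, ← two_nsmul, ← mul_nsmul']
      have : 2 * (s + 1) = (2 * s + 1) + 1 := by ring
      rw [this, add_nsmul, one_nsmul, ← hs, ← hqd, addOrderOf_nsmul_eq_zero, zero_add]
  · -- equivariance
    intro φ hbij hcomm
    have hfixmap : ∀ a : A, a ∈ FixedPts A σ → φ a ∈ FixedPts A σ := by
      intro a ha
      rw [memFix] at ha ⊢
      rw [← hcomm, ha]
    refine ⟨hfixmap, ?_⟩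
    set e : A ≃+ A := AddEquiv.ofBijective φ hbij with he
    have heφ : ∀ a : A, e a = φ a := fun a => rfl
    have hcomm' : ∀ a : A, e.symm (σ a) = σ (e.symm a) := by
      intro a
      apply hbij.1
      calc φ (e.symm (σ a)) = e (e.symm (σ a)) := (heφ _).symm
        _ = σ a := e.apply_symm_apply _
        _ = σ (e (e.symm a)) := by rw [e.apply_symm_apply]
        _ = σ (φ (e.symm a)) := by rw [heφ]
        _ = φ (σ (e.symm a)) := (hcomm _).symm
    -- maps on cocycles
    have hzmap : ∀ (f : A →+ A), (∀ a, f (σ a) = σ (f a)) →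
        ∀ a : A, a ∈ Zone A σ → f a ∈ Zone A σ := by
      intro f hf a ha
      rw [memZ] at ha ⊢
      rw [← hf, ← map_add, ha, map_zero]
    have hbmap : ∀ (f : A →+ A), (∀ a, f (σ a) = σ (f a)) →
        ∀ a : A, a ∈ Bone A σ → f a ∈ Bone A σ := by
      intro f hf a ha
      rw [memB] at ha ⊢
      obtain ⟨b, hb⟩ := ha
      exact ⟨f b, by rw [← hf, ← map_sub, hb]⟩
    set F : Zone A σ →+ Zone A σ := AddMonoidHom.mk'
      (fun z => ⟨φ z.1, hzmap φ hcomm z.1 z.2⟩)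
      (by
        intro x y
        apply Subtype.ext
        show φ ((x + y : Zone A σ) : A) = φ x.1 + φ y.1
        rw [AddSubgroup.coe_add, map_add]) with hF
    set G : Zone A σ →+ Zone A σ := AddMonoidHom.mk'
      (fun z => ⟨e.symm z.1, hzmap e.symm.toAddMonoidHom (fun a => hcomm' a) z.1 z.2⟩)
      (by
        intro x y
        apply Subtype.ext
        show e.symm ((x + y : Zone A σ) : A) = e.symm x.1 + e.symm y.1
        rw [AddSubgroup.coe_add, map_add]) with hG
    have hcondF : (Bone A σ).addSubgroupOf (Zone A σ) ≤
        ((Bone A σ).addSubgroupOf (Zone A σ)).comap F := by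
      intro z hz
      rw [AddSubgroup.mem_addSubgroupOf] at hz
      rw [AddSubgroup.mem_comap, AddSubgroup.mem_addSubgroupOf]
      exact hbmap φ hcomm z.1 hz
    have hcondG : (Bone A σ).addSubgroupOf (Zone A σ) ≤
        ((Bone A σ).addSubgroupOf (Zone A σ)).comap G := by
      intro z hz
      rw [AddSubgroup.mem_addSubgroupOf] at hz
      rw [AddSubgroup.mem_comap, AddSubgroup.mem_addSubgroupOf]
      exact hbmap e.symm.toAddMonoidHom (fun a => hcomm' a) z.1 hz
    set N := (Bone A σ).addSubgroupOf (Zone A σ) with hN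
    set Fm : Hone A σ →+ Hone A σ := QuotientAddGroup.map N N F hcondF with hFm
    set Gm : Hone A σ →+ Hone A σ := QuotientAddGroup.map N N G hcondG with hGm
    have hFmk : ∀ z : Zone A σ, Fm (QuotientAddGroup.mk z) = QuotientAddGroup.mk (F z) :=
      fun z => rfl
    have hGmk : ∀ z : Zone A σ, Gm (QuotientAddGroup.mk z) = QuotientAddGroup.mk (G z) :=
      fun z => rfl
    have hGF : ∀ c : Hone A σ, Gm (Fm c) = c := by
      intro c
      induction c using QuotientAddGroup.induction_on with
      | H z =>
        rw [hFmk, hGmk]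
        congr 1
        apply Subtype.ext
        show e.symm (φ z.1) = z.1
        rw [← heφ, e.symm_apply_apply]
    have hFG : ∀ c : Hone A σ, Fm (Gm c) = c := by
      intro c
      induction c using QuotientAddGroup.induction_on with
      | H z =>
        rw [hGmk, hFmk]
        congr 1
        apply Subtype.ext
        show φ (e.symm z.1) = z.1
        rw [← heφ, e.apply_symm_apply]
    refine ⟨{ toFun := Fm, invFun := Gm, left_inv := hGF, right_inv := hFG,
              map_add' := Fm.map_add }, ?_, ?_⟩
    · intro a ha ha'
      show Fm (QuotientAddGroup.mk _) = _
      rw [hFmk]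
      congr 1
    · intro a ha ha'
      show Fm (ψ ⟨a, ha⟩) = ψ ⟨φ a, ha'⟩
      rw [hψap, hψap, hFmk]
      congr 1
      apply Subtype.ext
      show φ (d a).1 = (d (φ a)).1
      rw [hdf φ a]
end
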